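/- In a restriction semigroup, if s₁, ..., sₙ (n ≥ 1) are pairwise compatible, then their meet with respect to the natural partial order exists and equals sᵢ·e for each i, where e = s₁* s₂* ⋯ sₙ*. -/

import Mathlib

/-!
The product `e = s₁* ⋯ sₙ*` is a projection (`e* = e`) absorbing every `sᵢ*` (`e sᵢ* = e`),
so compatibility `sᵢ sⱼ* = sⱼ sᵢ*` gives `sᵢ e = sⱼ (sᵢ e)*`, i.e. `sᵢ e ≤ sⱼ`. Conversely a
common lower bound `t` satisfies `t sⱼ* = t` for all `j`, hence `t e = t`, and then
`t = sᵢ t* e = sᵢ e t*`, i.e. `t ≤ sᵢ e`.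
-/

/-- A restriction semigroup: an Ehresmann semigroup (a semigroup with a unary
operation `rstar` satisfying `x x* = x`, `x* y* = y* x* = (x* y*)*`, `(xy)* = (x* y)*`)
which additionally satisfies the identity `x* y = y (xy)*`. -/
class RestrictionSemigroup (S : Type*) extends Semigroup S where
  rstar : S → S
  mul_rstar_self : ∀ x : S, x * rstar x = x
  rstar_comm : ∀ x y : S, rstar x * rstar y = rstar y * rstar x
  rstar_mul_proj : ∀ x y : S, rstar x * rstar y = rstar (rstar x * rstar y)
  rstar_mul : ∀ x y : S, rstar (x * y) = rstar (rstar x * y)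
  restriction : ∀ x y : S, rstar x * y = y * rstar (x * y)

open RestrictionSemigroup

variable {S : Type*} [RestrictionSemigroup S]

/-- The natural partial order: `s ≤ t` iff `s = t s*`. -/
def rle (s t : S) : Prop := s = t * rstar s

namespace RestrictionSemigroup

variable {S : Type*} [RestrictionSemigroup S]

theorem rstar_mul_rstar_self (x : S) : rstar x * rstar x = rstar x := by
  have h := rstar_mul x (rstar x)
  rw [mul_rstar_self] at h
  rw [rstar_mul_proj, ← h]

theorem rstar_rstar (x : S) : rstar (rstar x) = rstar x := by
  simpa only [rstar_mul_rstar_self] using (rstar_mul_proj x x).symm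

theorem rstar_mul_comm_of_rstar_eq {e : S} (he : rstar e = e) (y : S) :
    rstar y * e = e * rstar y := by
  simpa only [he] using rstar_comm y e

theorem rstar_mul_of_rstar_eq {e : S} (he : rstar e = e) (x : S) :
    rstar (x * e) = rstar x * e := by
  rw [rstar_mul, ← he, ← rstar_mul_proj, he]

theorem mul_rstar_of_rle {t y : S} (h : rle t y) : t * rstar y = t := by
  unfold rle at h
  rw [h, mul_assoc, rstar_comm, ← mul_assoc, mul_rstar_self]

theorem rle_mul_of_compatible {x y e : S} (hxy : x * rstar y = y * rstar x)
    (he : rstar e = e) (hey : e * rstar y = e) : rle (x * e) y := by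
  unfold rle
  rw [rstar_mul_of_rstar_eq he, ← mul_assoc, ← hxy, mul_assoc,
    rstar_mul_comm_of_rstar_eq he, hey]

theorem rle_mul_of_mul_eq {t x e : S} (he : rstar e = e) (hte : t * e = t) (htx : rle t x) :
    rle t (x * e) := by
  unfold rle at htx ⊢
  calc t = x * rstar t * e := by rw [← htx, hte]
    _ = x * e * rstar t := by rw [mul_assoc, rstar_mul_comm_of_rstar_eq he, ← mul_assoc]

section Fold

variable (l : List S)

theorem rstar_foldl_mul_rstar {b : S} (hb : rstar b = b) :
    rstar (l.foldl (fun b x => b * rstar x) b) = l.foldl (fun b x => b * rstar x) b := by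
  induction l generalizing b with
  | nil => exact hb
  | cons z l ih =>
    exact ih ((rstar_mul_of_rstar_eq (rstar_rstar z) b).trans (by rw [hb]))

theorem foldl_mul_rstar_mul_rstar_of_mul_rstar {b y : S} (hb : b * rstar y = b) :
    l.foldl (fun b x => b * rstar x) b * rstar y = l.foldl (fun b x => b * rstar x) b := by
  induction l generalizing b with
  | nil => exact hb
  | cons z l ih =>
    exact ih (by rw [mul_assoc, rstar_comm, ← mul_assoc, hb])

theorem foldl_mul_rstar_mul_rstar_of_mem (b : S) {y : S} (hy : y ∈ l) :
    l.foldl (fun b x => b * rstar x) b * rstar y = l.foldl (fun b x => b * rstar x) b := by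
  induction l generalizing b with
  | nil => cases hy
  | cons z l ih =>
    rcases List.mem_cons.mp hy with rfl | hy
    · exact foldl_mul_rstar_mul_rstar_of_mul_rstar l (by rw [mul_assoc, rstar_mul_rstar_self])
    · exact ih _ hy

theorem mul_foldl_mul_rstar (t b : S) :
    t * l.foldl (fun b x => b * rstar x) b = l.foldl (fun b x => b * rstar x) (t * b) := by
  induction l generalizing b with
  | nil => rfl
  | cons z l ih => simp only [List.foldl_cons, ih, mul_assoc]

theorem foldl_mul_rstar_eq_self {t : S} (ht : ∀ y ∈ l, t * rstar y = t) :
    l.foldl (fun b x => b * rstar x) t = t := by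
  induction l with
  | nil => rfl
  | cons z l ih =>
    rw [List.foldl_cons, ht z List.mem_cons_self]
    exact ih fun y hy => ht y (List.mem_cons_of_mem _ hy)

end Fold

end RestrictionSemigroup

/-- If `s₁, …, sₙ` (`n ≥ 1`, here the nonempty list `a :: l`) are pairwise
compatible, then their meet with respect to the natural partial order exists and
equals `sᵢ e` for each `i`, where `e = s₁* s₂* ⋯ sₙ*`. -/
theorem stmt12 (a : S) (l : List S)
    (hcomp : ∀ x ∈ a :: l, ∀ y ∈ a :: l, x * rstar y = y * rstar x)
    (e : S) (he : e = l.foldl (fun b x => b * rstar x) (rstar a)) :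
    ∀ x ∈ a :: l,
      (∀ y ∈ a :: l, rle (x * e) y) ∧
      (∀ t : S, (∀ y ∈ a :: l, rle t y) → rle t (x * e)) := by
  subst he
  have he_proj := rstar_foldl_mul_rstar l (rstar_rstar a)
  intro x hx
  refine ⟨fun y hy => rle_mul_of_compatible (hcomp x hx y hy) he_proj ?_,
    fun t ht => rle_mul_of_mul_eq he_proj ?_ (ht x hx)⟩
  · rcases List.mem_cons.mp hy with rfl | hy
    · exact foldl_mul_rstar_mul_rstar_of_mul_rstar l (rstar_mul_rstar_self y)
    · exact foldl_mul_rstar_mul_rstar_of_mem l _ hy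
  · have ht_abs : ∀ y ∈ a :: l, t * rstar y = t := fun y hy => mul_rstar_of_rle (ht y hy)
    rw [mul_foldl_mul_rstar, ht_abs a List.mem_cons_self]
    exact foldl_mul_rstar_eq_self l fun y hy => ht_abs y (List.mem_cons_of_mem _ hy)
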